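/- The geodesic distance d_c is a metric on the Poincaré ball: for all x, y, z ∈ B_c^n, d_c(x,y) ≥ 0; d_c(x,y) = 0 if and only if x = y; d_c(x,y) = d_c(y,x); and d_c(x,z) ≤ d_c(x,y) + d_c(y,z). -/

import Mathlib

noncomputable section

open scoped RealInnerProductSpace

attribute [local instance] Classical.propDecidable

/-- Inverse hyperbolic tangent. -/
def artanh (x : ℝ) : ℝ := Real.log ((1 + x) / (1 - x)) / 2

/-- Möbius addition on the Poincaré ball of curvature `-c` in `ℝ^n`:
`x ⊕_c y = ((1 + 2c⟨x,y⟩ + c‖y‖²)x + (1 − c‖x‖²)y) / (1 + 2c⟨x,y⟩ + c²‖x‖²‖y‖²)`. -/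
def mobiusAdd {n : ℕ} (c : ℝ) (x y : EuclideanSpace ℝ (Fin n)) :
    EuclideanSpace ℝ (Fin n) :=
  (1 + 2 * c * ⟪x, y⟫ + c ^ 2 * ‖x‖ ^ 2 * ‖y‖ ^ 2)⁻¹ •
    ((1 + 2 * c * ⟪x, y⟫ + c * ‖y‖ ^ 2) • x + (1 - c * ‖x‖ ^ 2) • y)

/-- The geodesic distance on the Poincaré ball:
`d_c(x,y) = (2/√c)·artanh(√c‖(⊖_c x) ⊕_c y‖)`, where `⊖_c x = -x`. -/
def pdist {n : ℕ} (c : ℝ) (x y : EuclideanSpace ℝ (Fin n)) : ℝ :=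
  (2 / Real.sqrt c) * artanh (Real.sqrt c * ‖mobiusAdd c (-x) y‖)

/-- The conformal factor `λ_x^c = 2/(1 − c‖x‖²)`. -/
def lam {n : ℕ} (c : ℝ) (x : EuclideanSpace ℝ (Fin n)) : ℝ :=
  2 / (1 - c * ‖x‖ ^ 2)

/-- The exponential map at `x`:
`exp_x^c(v) = x ⊕_c ((1/√c)·tanh(√c·λ_x^c·‖v‖/2)·v/‖v‖)` for `v ≠ 0`, `exp_x^c(0) = x`. -/
def expMap {n : ℕ} (c : ℝ) (x v : EuclideanSpace ℝ (Fin n)) :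
    EuclideanSpace ℝ (Fin n) :=
  if v = 0 then x else
    mobiusAdd c x
      (((1 / Real.sqrt c) * Real.tanh (Real.sqrt c * lam c x * ‖v‖ / 2) * ‖v‖⁻¹) • v)

/-- The logarithmic map at `x`:
`log_x^c(y) = (2/(√c·λ_x^c))·artanh(√c‖(⊖_c x) ⊕_c y‖)·((⊖_c x) ⊕_c y)/‖(⊖_c x) ⊕_c y‖`
for `y ≠ x`, and `log_x^c(x) = 0`. -/
def logMap {n : ℕ} (c : ℝ) (x y : EuclideanSpace ℝ (Fin n)) :
    EuclideanSpace ℝ (Fin n) :=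
  if y = x then 0 else
    ((2 / (Real.sqrt c * lam c x)) * artanh (Real.sqrt c * ‖mobiusAdd c (-x) y‖) *
        ‖mobiusAdd c (-x) y‖⁻¹) • mobiusAdd c (-x) y


/- ======================== Auxiliary lemmas ======================== -/

section Aux

variable {n : ℕ}

lemma exp_artanh {u : ℝ} (h0 : 0 ≤ u) (h1 : u < 1) :
    Real.exp (artanh u) = Real.sqrt (1 + u) / Real.sqrt (1 - u) := by
  have hu1 : (0:ℝ) < 1 - u := by linarith
  have hu2 : (0:ℝ) < 1 + u := by linarith
  have hr : (0:ℝ) < (1 + u) / (1 - u) := div_pos hu2 hu1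
  have hsq : (Real.exp (artanh u)) ^ 2 = (1 + u) / (1 - u) := by
    rw [artanh, ← Real.exp_nat_mul]
    push_cast
    rw [show (2:ℝ) * (Real.log ((1 + u) / (1 - u)) / 2) = Real.log ((1 + u) / (1 - u)) by ring,
      Real.exp_log hr]
  rw [← Real.sqrt_div' _ hu1.le, ← hsq, Real.sqrt_sq (Real.exp_pos _).le]

lemma sinh_artanh {u : ℝ} (h0 : 0 ≤ u) (h1 : u < 1) :
    Real.sinh (artanh u) = u / Real.sqrt (1 - u ^ 2) := by
  have hu1 : (0:ℝ) < 1 - u := by linarith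
  have hu2 : (0:ℝ) < 1 + u := by linarith
  have hA : (0:ℝ) < Real.sqrt (1 + u) := Real.sqrt_pos.2 hu2
  have hB : (0:ℝ) < Real.sqrt (1 - u) := Real.sqrt_pos.2 hu1
  rw [Real.sinh_eq, Real.exp_neg, exp_artanh h0 h1,
    show (1:ℝ) - u ^ 2 = (1 + u) * (1 - u) by ring, Real.sqrt_mul hu2.le]
  rw [inv_div]
  have e1 : Real.sqrt (1 + u) * Real.sqrt (1 + u) = 1 + u := Real.mul_self_sqrt hu2.le
  have e2 : Real.sqrt (1 - u) * Real.sqrt (1 - u) = 1 - u := Real.mul_self_sqrt hu1.le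
  field_simp
  nlinarith [e1, e2]

lemma cosh_artanh {u : ℝ} (h0 : 0 ≤ u) (h1 : u < 1) :
    Real.cosh (artanh u) = 1 / Real.sqrt (1 - u ^ 2) := by
  have hu1 : (0:ℝ) < 1 - u := by linarith
  have hu2 : (0:ℝ) < 1 + u := by linarith
  have hA : (0:ℝ) < Real.sqrt (1 + u) := Real.sqrt_pos.2 hu2
  have hB : (0:ℝ) < Real.sqrt (1 - u) := Real.sqrt_pos.2 hu1
  rw [Real.cosh_eq, Real.exp_neg, exp_artanh h0 h1,
    show (1:ℝ) - u ^ 2 = (1 + u) * (1 - u) by ring, Real.sqrt_mul hu2.le]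
  rw [inv_div]
  have e1 : Real.sqrt (1 + u) * Real.sqrt (1 + u) = 1 + u := Real.mul_self_sqrt hu2.le
  have e2 : Real.sqrt (1 - u) * Real.sqrt (1 - u) = 1 - u := Real.mul_self_sqrt hu1.le
  field_simp
  nlinarith [e1, e2]

lemma artanh_nonneg {u : ℝ} (h0 : 0 ≤ u) (h1 : u < 1) : 0 ≤ artanh u := by
  have hu1 : (0:ℝ) < 1 - u := by linarith
  have : (1:ℝ) ≤ (1 + u) / (1 - u) := by
    rw [le_div_iff₀ hu1]; linarith
  have := Real.log_nonneg this
  unfold artanh; linarith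

lemma artanh_eq_zero_iff {u : ℝ} (h0 : 0 ≤ u) (h1 : u < 1) : artanh u = 0 ↔ u = 0 := by
  constructor
  · intro h
    have hu1 : (0:ℝ) < 1 - u := by linarith
    have hlog : Real.log ((1 + u) / (1 - u)) = 0 := by unfold artanh at h; linarith
    rcases Real.log_eq_zero.1 hlog with h' | h' | h'
    · exfalso; have := div_pos (by linarith : (0:ℝ) < 1 + u) hu1; linarith
    · field_simp at h'; linarith
    · exfalso; have := div_pos (by linarith : (0:ℝ) < 1 + u) hu1; linarith
  · rintro rfl; simp [artanh]

lemma expand_sq (a b : ℝ) (x y : EuclideanSpace ℝ (Fin n)) :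
    ‖a • x + b • y‖ ^ 2 = a ^ 2 * ‖x‖ ^ 2 + 2 * (a * b * ⟪x, y⟫) + b ^ 2 * ‖y‖ ^ 2 := by
  rw [norm_add_sq_real, real_inner_smul_left, real_inner_smul_right, norm_smul, norm_smul,
    mul_pow, mul_pow, Real.norm_eq_abs, Real.norm_eq_abs, sq_abs, sq_abs]
  ring

lemma scalar_id {c t X Y : ℝ} (hD : 1 - 2 * c * t + c ^ 2 * X * Y ≠ 0) :
    ((1 - 2 * c * t + c ^ 2 * X * Y)⁻¹) ^ 2 *
      ((-(1 + 2 * c * (-t) + c * Y)) ^ 2 * X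
        + 2 * ((-(1 + 2 * c * (-t) + c * Y)) * (1 - c * X) * t) + (1 - c * X) ^ 2 * Y)
      = (X - 2 * t + Y) / (1 - 2 * c * t + c ^ 2 * X * Y) := by
  field_simp
  ring

lemma D_pos {c : ℝ} (hc : 0 < c) {x y : EuclideanSpace ℝ (Fin n)}
    (hx : c * ‖x‖ ^ 2 < 1) (hy : c * ‖y‖ ^ 2 < 1) :
    0 < 1 - 2 * c * ⟪x, y⟫ + c ^ 2 * ‖x‖ ^ 2 * ‖y‖ ^ 2 := by
  have h := norm_sub_sq_real x y
  nlinarith [sq_nonneg ‖x - y‖, mul_nonneg hc.le (sq_nonneg ‖x - y‖),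
    mul_pos (by linarith : (0:ℝ) < 1 - c * ‖x‖ ^ 2) (by linarith : (0:ℝ) < 1 - c * ‖y‖ ^ 2)]

lemma norm_mobius_sq {c : ℝ} {x y : EuclideanSpace ℝ (Fin n)}
    (hD : 1 - 2 * c * ⟪x, y⟫ + c ^ 2 * ‖x‖ ^ 2 * ‖y‖ ^ 2 ≠ 0) :
    ‖mobiusAdd c (-x) y‖ ^ 2
      = ‖x - y‖ ^ 2 / (1 - 2 * c * ⟪x, y⟫ + c ^ 2 * ‖x‖ ^ 2 * ‖y‖ ^ 2) := by
  have h1 : ⟪-x, y⟫ = -⟪x, y⟫ := inner_neg_left x y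
  have h2 : ‖(-x : EuclideanSpace ℝ (Fin n))‖ = ‖x‖ := norm_neg x
  rw [mobiusAdd, h1, h2]
  rw [norm_smul, mul_pow, Real.norm_eq_abs, sq_abs]
  rw [show (1 + 2 * c * -⟪x, y⟫ + c * ‖y‖ ^ 2) • (-x)
      = (-(1 + 2 * c * -⟪x, y⟫ + c * ‖y‖ ^ 2)) • x by rw [neg_smul, smul_neg]]
  rw [expand_sq]
  rw [norm_sub_sq_real]
  rw [show 1 + 2 * c * -⟪x, y⟫ + c ^ 2 * ‖x‖ ^ 2 * ‖y‖ ^ 2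
      = 1 - 2 * c * ⟪x, y⟫ + c ^ 2 * ‖x‖ ^ 2 * ‖y‖ ^ 2 by ring]
  exact scalar_id hD

lemma ptolemy_key {c : ℝ} (hc : 0 < c) (x y z : EuclideanSpace ℝ (Fin n))
    (hy : c * ‖y‖ ^ 2 < 1) :
    ‖x - z‖ * (1 - c * ‖y‖ ^ 2) ≤
      ‖x - y‖ * Real.sqrt (1 - 2 * c * ⟪y, z⟫ + c ^ 2 * ‖y‖ ^ 2 * ‖z‖ ^ 2) +
      ‖y - z‖ * Real.sqrt (1 - 2 * c * ⟪x, y⟫ + c ^ 2 * ‖x‖ ^ 2 * ‖y‖ ^ 2) := by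
  rcases eq_or_ne y 0 with rfl | hy0
  · simp only [inner_zero_left, inner_zero_right, norm_zero, mul_zero, zero_mul, sub_zero,
      zero_sub, norm_neg, zero_pow, mul_one, add_zero]
    norm_num
    calc ‖x - z‖ ≤ ‖x‖ + ‖z‖ := norm_sub_le x z
    _ = _ := by ring
  · have hyn : (0:ℝ) < ‖y‖ := norm_pos_iff.2 hy0
    set k : ℝ := c * ‖y‖ with hk
    have hkpos : 0 < k := mul_pos hc hyn
    set A := k • x with hA
    set B := (‖y‖⁻¹) • y with hB
    set C := k • z with hC
    set Dp := k • y with hDp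
    have hdist : ∀ u v : EuclideanSpace ℝ (Fin n), dist u v = ‖u - v‖ :=
      fun u v => dist_eq_norm u v
    have hAC : dist A C = k * ‖x - z‖ := by
      rw [hdist, hA, hC, ← smul_sub, norm_smul, Real.norm_eq_abs, abs_of_pos hkpos]
    have hBD : dist B Dp = 1 - c * ‖y‖ ^ 2 := by
      rw [hdist, hB, hDp, ← sub_smul, norm_smul, Real.norm_eq_abs]
      have h1 : ‖y‖⁻¹ - k = (1 - c * ‖y‖ ^ 2) / ‖y‖ := by
        field_simp [hk]; ring
      rw [h1, abs_of_pos (div_pos (by linarith) hyn)]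
      field_simp
    have hAD : dist A Dp = k * ‖x - y‖ := by
      rw [hdist, hA, hDp, ← smul_sub, norm_smul, Real.norm_eq_abs, abs_of_pos hkpos]
    have hCD : dist C Dp = k * ‖y - z‖ := by
      rw [hdist, hC, hDp, ← smul_sub, norm_smul, Real.norm_eq_abs, abs_of_pos hkpos,
        norm_sub_rev]
    have hAB : dist A B = Real.sqrt (1 - 2 * c * ⟪x, y⟫ + c ^ 2 * ‖x‖ ^ 2 * ‖y‖ ^ 2) := by
      have hsq : (dist A B) ^ 2 = 1 - 2 * c * ⟪x, y⟫ + c ^ 2 * ‖x‖ ^ 2 * ‖y‖ ^ 2 := by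
        rw [hdist, hA, hB, sub_eq_add_neg, ← neg_smul, expand_sq]
        have h2 : ‖y‖⁻¹ ^ 2 * ‖y‖ ^ 2 = 1 := by field_simp
        have h3 : k * -‖y‖⁻¹ * ⟪x, y⟫ = -(c * ⟪x, y⟫) := by
          rw [hk]; field_simp
        rw [h3]
        rw [show (-‖y‖⁻¹) ^ 2 * ‖y‖ ^ 2 = ‖y‖⁻¹ ^ 2 * ‖y‖ ^ 2 by ring, h2, hk]
        ring
      rw [← hsq, Real.sqrt_sq dist_nonneg]
    have hBC : dist B C = Real.sqrt (1 - 2 * c * ⟪y, z⟫ + c ^ 2 * ‖y‖ ^ 2 * ‖z‖ ^ 2) := by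
      have hsq : (dist B C) ^ 2 = 1 - 2 * c * ⟪y, z⟫ + c ^ 2 * ‖y‖ ^ 2 * ‖z‖ ^ 2 := by
        rw [hdist, hB, hC, sub_eq_add_neg, ← neg_smul, expand_sq]
        have h2 : ‖y‖⁻¹ ^ 2 * ‖y‖ ^ 2 = 1 := by field_simp
        have h3 : ‖y‖⁻¹ * -k * ⟪y, z⟫ = -(c * ⟪y, z⟫) := by
          rw [hk]; field_simp
        rw [h3, h2, hk]
        ring
      rw [← hsq, Real.sqrt_sq dist_nonneg]
    have H := EuclideanGeometry.mul_dist_le_mul_dist_add_mul_dist A B C Dp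
    rw [hAC, hBD, hAB, hBC, hAD, hCD] at H
    have H2 : k * (‖x - z‖ * (1 - c * ‖y‖ ^ 2)) ≤
        k * (‖x - y‖ * Real.sqrt (1 - 2 * c * ⟪y, z⟫ + c ^ 2 * ‖y‖ ^ 2 * ‖z‖ ^ 2) +
        ‖y - z‖ * Real.sqrt (1 - 2 * c * ⟪x, y⟫ + c ^ 2 * ‖x‖ ^ 2 * ‖y‖ ^ 2)) := by
      calc k * (‖x - z‖ * (1 - c * ‖y‖ ^ 2))
          = k * ‖x - z‖ * (1 - c * ‖y‖ ^ 2) := by ring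
      _ ≤ _ := H.trans_eq (by ring)
    exact le_of_mul_le_mul_left H2 hkpos

lemma one_sub_helper {D cp ab m2 : ℝ} (hD : D ≠ 0) (hsum : D = cp + ab)
    (hm : m2 = cp / D) : 1 - m2 = ab / D := by
  rw [hm, eq_div_iff hD, sub_mul, div_mul_cancel₀ _ hD, one_mul]
  linarith

lemma div_div_div_same (A s d : ℝ) (hd : d ≠ 0) : A / d / (s / d) = A / s := by
  rcases eq_or_ne s 0 with rfl | hs
  · simp
  · field_simp

lemma norm_mobius {c : ℝ} (hc : 0 < c) {x y : EuclideanSpace ℝ (Fin n)}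
    (hx : c * ‖x‖ ^ 2 < 1) (hy : c * ‖y‖ ^ 2 < 1) :
    ‖mobiusAdd c (-x) y‖
      = ‖x - y‖ / Real.sqrt (1 - 2 * c * ⟪x, y⟫ + c ^ 2 * ‖x‖ ^ 2 * ‖y‖ ^ 2) := by
  have hD := D_pos hc hx hy
  rw [← Real.sqrt_sq (norm_nonneg (mobiusAdd c (-x) y)), norm_mobius_sq hD.ne',
    Real.sqrt_div' _ hD.le, Real.sqrt_sq (norm_nonneg _)]

lemma D_sum {c : ℝ} (x y : EuclideanSpace ℝ (Fin n)) :
    1 - 2 * c * ⟪x, y⟫ + c ^ 2 * ‖x‖ ^ 2 * ‖y‖ ^ 2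
      = c * ‖x - y‖ ^ 2 + (1 - c * ‖x‖ ^ 2) * (1 - c * ‖y‖ ^ 2) := by
  rw [norm_sub_sq_real]; ring

lemma delta_sq {c : ℝ} (hc : 0 < c) {x y : EuclideanSpace ℝ (Fin n)}
    (hx : c * ‖x‖ ^ 2 < 1) (hy : c * ‖y‖ ^ 2 < 1) :
    (Real.sqrt c * ‖mobiusAdd c (-x) y‖) ^ 2
      = c * ‖x - y‖ ^ 2 / (1 - 2 * c * ⟪x, y⟫ + c ^ 2 * ‖x‖ ^ 2 * ‖y‖ ^ 2) := by
  rw [mul_pow, Real.sq_sqrt hc.le, norm_mobius_sq (D_pos hc hx hy).ne', mul_div_assoc']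

lemma one_sub_delta_sq {c : ℝ} (hc : 0 < c) {x y : EuclideanSpace ℝ (Fin n)}
    (hx : c * ‖x‖ ^ 2 < 1) (hy : c * ‖y‖ ^ 2 < 1) :
    1 - (Real.sqrt c * ‖mobiusAdd c (-x) y‖) ^ 2
      = (1 - c * ‖x‖ ^ 2) * (1 - c * ‖y‖ ^ 2)
        / (1 - 2 * c * ⟪x, y⟫ + c ^ 2 * ‖x‖ ^ 2 * ‖y‖ ^ 2) :=
  one_sub_helper (D_pos hc hx hy).ne' (D_sum x y) (delta_sq hc hx hy)

lemma delta_lt_one {c : ℝ} (hc : 0 < c) {x y : EuclideanSpace ℝ (Fin n)}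
    (hx : c * ‖x‖ ^ 2 < 1) (hy : c * ‖y‖ ^ 2 < 1) :
    Real.sqrt c * ‖mobiusAdd c (-x) y‖ < 1 := by
  have hab : (0:ℝ) < (1 - c * ‖x‖ ^ 2) * (1 - c * ‖y‖ ^ 2) :=
    mul_pos (by linarith) (by linarith)
  have h := one_sub_delta_sq hc hx hy
  have h2 : 0 < 1 - (Real.sqrt c * ‖mobiusAdd c (-x) y‖) ^ 2 := by
    rw [h]; exact div_pos hab (D_pos hc hx hy)
  nlinarith [mul_nonneg (Real.sqrt_nonneg c) (norm_nonneg (mobiusAdd c (-x) y))]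

lemma pair_sinh {c : ℝ} (hc : 0 < c) {x y : EuclideanSpace ℝ (Fin n)}
    (hx : c * ‖x‖ ^ 2 < 1) (hy : c * ‖y‖ ^ 2 < 1) :
    Real.sinh (artanh (Real.sqrt c * ‖mobiusAdd c (-x) y‖))
      = Real.sqrt c * ‖x - y‖
        / Real.sqrt ((1 - c * ‖x‖ ^ 2) * (1 - c * ‖y‖ ^ 2)) := by
  have hD := D_pos hc hx hy
  have hδ0 : 0 ≤ Real.sqrt c * ‖mobiusAdd c (-x) y‖ :=
    mul_nonneg (Real.sqrt_nonneg c) (norm_nonneg _)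
  rw [sinh_artanh hδ0 (delta_lt_one hc hx hy), one_sub_delta_sq hc hx hy,
    Real.sqrt_div' _ hD.le, norm_mobius hc hx hy, mul_div_assoc']
  exact div_div_div_same _ _ _ (Real.sqrt_pos.2 hD).ne'

lemma pair_cosh {c : ℝ} (hc : 0 < c) {x y : EuclideanSpace ℝ (Fin n)}
    (hx : c * ‖x‖ ^ 2 < 1) (hy : c * ‖y‖ ^ 2 < 1) :
    Real.cosh (artanh (Real.sqrt c * ‖mobiusAdd c (-x) y‖))
      = Real.sqrt (1 - 2 * c * ⟪x, y⟫ + c ^ 2 * ‖x‖ ^ 2 * ‖y‖ ^ 2)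
        / Real.sqrt ((1 - c * ‖x‖ ^ 2) * (1 - c * ‖y‖ ^ 2)) := by
  have hD := D_pos hc hx hy
  have hδ0 : 0 ≤ Real.sqrt c * ‖mobiusAdd c (-x) y‖ :=
    mul_nonneg (Real.sqrt_nonneg c) (norm_nonneg _)
  rw [cosh_artanh hδ0 (delta_lt_one hc hx hy), one_sub_delta_sq hc hx hy,
    Real.sqrt_div' _ hD.le, one_div, inv_div]

lemma final_scalar {sc r p q S1 S2 sa sb sg β : ℝ} (hsa : 0 < sa) (hsb : 0 < sb)
    (hsg : 0 < sg) (hsc : 0 ≤ sc) (hbb : sb * sb = β)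
    (key : r * β ≤ p * S2 + q * S1) :
    sc * r / (sa * sg) ≤
      sc * p / (sa * sb) * (S2 / (sb * sg)) + S1 / (sa * sb) * (sc * q / (sb * sg)) := by
  rw [div_mul_div_comm, div_mul_div_comm, ← add_div,
    div_le_div_iff₀ (mul_pos hsa hsg) (by positivity)]
  calc sc * r * (sa * sb * (sb * sg)) = sc * (r * β) * (sa * sg) := by rw [← hbb]; ring
  _ ≤ sc * (p * S2 + q * S1) * (sa * sg) := by
      apply mul_le_mul_of_nonneg_right _ (by positivity)
      exact mul_le_mul_of_nonneg_left key hsc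
  _ = _ := by ring

end Aux

/-- The geodesic distance `d_c` is a metric on the Poincaré ball. -/
theorem pdist_is_metric {n : ℕ} (hn : 1 ≤ n) (c : ℝ) (hc : 0 < c)
    (x y z : EuclideanSpace ℝ (Fin n))
    (hx : c * ‖x‖ ^ 2 < 1) (hy : c * ‖y‖ ^ 2 < 1) (hz : c * ‖z‖ ^ 2 < 1) :
    0 ≤ pdist c x y ∧ (pdist c x y = 0 ↔ x = y) ∧ pdist c x y = pdist c y x ∧
      pdist c x z ≤ pdist c x y + pdist c y z := by
  have hsc : 0 < Real.sqrt c := Real.sqrt_pos.2 hc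
  have h2c : 0 < 2 / Real.sqrt c := by positivity
  have hα : (0:ℝ) < 1 - c * ‖x‖ ^ 2 := by linarith
  have hβ : (0:ℝ) < 1 - c * ‖y‖ ^ 2 := by linarith
  have hγ : (0:ℝ) < 1 - c * ‖z‖ ^ 2 := by linarith
  have hδ0 : ∀ u v : EuclideanSpace ℝ (Fin n), 0 ≤ Real.sqrt c * ‖mobiusAdd c (-u) v‖ :=
    fun u v => mul_nonneg (Real.sqrt_nonneg c) (norm_nonneg _)
  refine ⟨?_, ?_, ?_, ?_⟩
  · exact mul_nonneg h2c.le (artanh_nonneg (hδ0 x y) (delta_lt_one hc hx hy))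
  · rw [pdist]
    constructor
    · intro h
      have h1 : artanh (Real.sqrt c * ‖mobiusAdd c (-x) y‖) = 0 := by
        rcases mul_eq_zero.1 h with h' | h'
        · exact absurd h' h2c.ne'
        · exact h'
      have h2 : Real.sqrt c * ‖mobiusAdd c (-x) y‖ = 0 :=
        (artanh_eq_zero_iff (hδ0 x y) (delta_lt_one hc hx hy)).1 h1
      have h3 : ‖mobiusAdd c (-x) y‖ = 0 := by
        rcases mul_eq_zero.1 h2 with h' | h'
        · exact absurd h' hsc.ne'
        · exact h'
      rw [norm_mobius hc hx hy] at h3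
      have hD := D_pos hc hx hy
      have h4 : ‖x - y‖ = 0 := by
        rcases div_eq_zero_iff.1 h3 with h' | h'
        · exact h'
        · exact absurd h' (Real.sqrt_pos.2 hD).ne'
      have h5 : x - y = 0 := norm_eq_zero.1 h4
      exact sub_eq_zero.1 h5
    · rintro rfl
      have h3 : ‖mobiusAdd c (-x) x‖ = 0 := by
        rw [norm_mobius hc hx hx, sub_self, norm_zero, zero_div]
      rw [h3, mul_zero, artanh, show (1:ℝ) + 0 = 1 by ring, show (1:ℝ) - 0 = 1 by ring]
      simp
  · have hsym : ‖mobiusAdd c (-x) y‖ = ‖mobiusAdd c (-y) x‖ := by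
      rw [norm_mobius hc hx hy, norm_mobius hc hy hx, norm_sub_rev x y,
        real_inner_comm x y]
      ring_nf
    rw [pdist, pdist, hsym]
  · rw [pdist, pdist, pdist, ← mul_add]
    apply mul_le_mul_of_nonneg_left _ h2c.le
    apply Real.sinh_le_sinh.1
    rw [Real.sinh_add, pair_sinh hc hx hz, pair_sinh hc hx hy, pair_cosh hc hy hz,
      pair_cosh hc hx hy, pair_sinh hc hy hz]
    rw [Real.sqrt_mul hα.le (1 - c * ‖z‖ ^ 2), Real.sqrt_mul hα.le (1 - c * ‖y‖ ^ 2),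
      Real.sqrt_mul hβ.le (1 - c * ‖z‖ ^ 2)]
    exact final_scalar (Real.sqrt_pos.2 hα) (Real.sqrt_pos.2 hβ) (Real.sqrt_pos.2 hγ)
      (Real.sqrt_nonneg c) (Real.mul_self_sqrt hβ.le) (ptolemy_key hc x y z hy)
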